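/- Let a,b,c > 0 with b^4 < 1, and define f(x) = (c^4 + 3a^2b^2 x + 3a^4b^4 x^2 + a^6b^6c^4 x^3) / (b^6c^4 + 3a^2b^4 x + 3a^4b^2 x^2 + a^6c^4 x^3). Then f is strictly decreasing on [0,∞). -/

import Mathlib

/-!
After clearing the (positive) denominators, the cross difference `N x * D y - N y * D x` factors
as `(1 - b^4) * (y - x)` times a polynomial in `x, y` with positive coefficients: the raw
expansion only produces the factors `1 - b^4`, `1 - b^8` and `1 - b^12`.
-/

theorem strictAntiOn_div_of_mul_lt_mul {α 𝕜 : Type*} [Preorder α] [Field 𝕜] [LinearOrder 𝕜]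
    [IsStrictOrderedRing 𝕜] {s : Set α} {N D : α → 𝕜} (hD : ∀ x ∈ s, 0 < D x)
    (h : ∀ x ∈ s, ∀ y ∈ s, x < y → N y * D x < N x * D y) :
    StrictAntiOn (fun x => N x / D x) s :=
  fun x hx y hy hxy => (div_lt_div_iff₀ (hD y hy) (hD x hx)).2 (h x hx y hy hxy)

namespace Gibbs

variable (a b c : ℝ)

def num (x : ℝ) : ℝ := c^4 + 3*a^2*b^2*x + 3*a^4*b^4*x^2 + a^6*b^6*c^4*x^3

def den (x : ℝ) : ℝ := b^6*c^4 + 3*a^2*b^4*x + 3*a^4*b^2*x^2 + a^6*c^4*x^3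

theorem den_pos {b c : ℝ} (hb : 0 < b) (hc : 0 < c) {x : ℝ} (hx : 0 ≤ x) : 0 < den a b c x := by
  unfold den
  positivity

theorem num_mul_den_sub (x y : ℝ) :
    num a b c x * den a b c y - num a b c y * den a b c x =
      (1 - b^4) * (y - x) *
        (3*a^2*b^4*c^4 + 3*a^4*b^2*c^4*(1 + b^4)*(x + y)
          + a^6*c^8*(1 + b^4 + b^8)*(x^2 + x*y + y^2) + 9*a^6*b^4*x*y
          + 3*a^8*b^2*c^4*(1 + b^4)*x*y*(x + y) + 3*a^10*b^4*c^4*x^2*y^2) := by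
  unfold num den
  ring

theorem num_mul_den_lt {a b c : ℝ} (ha : 0 < a) (hb : 0 < b) (hc : 0 < c) (hb4 : b^4 < 1)
    {x y : ℝ} (hx : 0 ≤ x) (hy : 0 ≤ y) (hxy : x < y) :
    num a b c y * den a b c x < num a b c x * den a b c y := by
  have h4 : 0 < 1 - b^4 := sub_pos.2 hb4
  have hyx : 0 < y - x := sub_pos.2 hxy
  rw [← sub_pos, num_mul_den_sub]
  positivity

end Gibbs

theorem f_strictAntiOn (a b c : ℝ) (ha : 0 < a) (hb : 0 < b) (hc : 0 < c)
    (hb4 : b^4 < 1) :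
    StrictAntiOn (fun x : ℝ =>
      (c^4 + 3*a^2*b^2*x + 3*a^4*b^4*x^2 + a^6*b^6*c^4*x^3) /
        (b^6*c^4 + 3*a^2*b^4*x + 3*a^4*b^2*x^2 + a^6*c^4*x^3))
      (Set.Ici (0:ℝ)) :=
  strictAntiOn_div_of_mul_lt_mul (N := Gibbs.num a b c) (D := Gibbs.den a b c)
    (fun _ hx => Gibbs.den_pos a hb hc hx)
    (fun _ hx _ hy hxy => Gibbs.num_mul_den_lt ha hb hc hb4 hx hy hxy)
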